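/- arXiv:2310.11444 — 5 statements merged into one kernel-verified Lean document; each statement's English description precedes it below -/
import Mathlib

section
/- Let (m,w) ∈ 𝓜 be such that the integral ∫₀^T∫_Ω [m L(w/m) + F(t,x,m)] dx dt is finite. Then m ∈ L^q(Q_T) and w ∈ L^β(Q_T; ℝ^N) with β = qr/(qr − q + 1). -/
open Set MeasureTheory
open scoped ENNReal NNReal RealInnerProductSpace Classical

noncomputable section

/-- The parabolic cylinder `Q_T = [0,T] × Ω`. -/
def cylQT (N : ℕ) (T : ℝ) (Ω : Set (EuclideanSpace ℝ (Fin N))) :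
    Set (ℝ × EuclideanSpace ℝ (Fin N)) := Set.Icc 0 T ×ˢ Ω

/-- The lateral boundary `[0,T] × ∂Ω`. -/
def latBdry (N : ℕ) (T : ℝ) (Ω : Set (EuclideanSpace ℝ (Fin N))) :
    Set (ℝ × EuclideanSpace ℝ (Fin N)) := Set.Icc 0 T ×ˢ frontier Ω

/-- The boundary measure `dt ⊗ dσ`, where `σ` is the `(N-1)`-dimensional Hausdorff
measure. -/
noncomputable def bdryMeas (N : ℕ) : Measure (ℝ × EuclideanSpace ℝ (Fin N)) :=
  (volume : Measure ℝ).prod (μH[(N : ℝ) - 1])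

/-- The Lagrangian `L(ξ) = H*(−ξ) = sup_p (−⟨ξ,p⟩ − H(p))`. -/
noncomputable def LagOf (N : ℕ) (H : EuclideanSpace ℝ (Fin N) → ℝ)
    (ξ : EuclideanSpace ℝ (Fin N)) : ℝ :=
  sSup (Set.range fun p => -⟪ξ, p⟫ - H p)

/-- Membership in the set `𝓜` of weak solutions of the continuity equation with
initial datum `m₀` and boundary inflow `j`. -/
def memMM (N : ℕ) (T : ℝ) (Ω : Set (EuclideanSpace ℝ (Fin N)))
    (m₀ : EuclideanSpace ℝ (Fin N) → ℝ) (j : ℝ × EuclideanSpace ℝ (Fin N) → ℝ)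
    (m : ℝ × EuclideanSpace ℝ (Fin N) → ℝ)
    (w : ℝ × EuclideanSpace ℝ (Fin N) → EuclideanSpace ℝ (Fin N)) : Prop :=
  IntegrableOn m (cylQT N T Ω) ∧ IntegrableOn w (cylQT N T Ω) ∧
  (∀ᵐ z ∂(volume.restrict (cylQT N T Ω)), 0 ≤ m z) ∧
  ∀ ξ : ℝ × EuclideanSpace ℝ (Fin N) → ℝ,
    (∃ K : ℝ≥0, LipschitzWith K ξ) → (∀ x, ξ (T, x) = 0) →
    (∫ z in cylQT N T Ω, (m z * fderiv ℝ ξ z (1, 0) + fderiv ℝ ξ z (0, w z)))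
      + (∫ x in Ω, ξ (0, x) * m₀ x)
      + (∫ p in latBdry N T Ω, j p * ξ p ∂(bdryMeas N)) = 0


lemma rpow_sub_one_mul' {x r : ℝ} (hx : 0 ≤ x) (hr : 1 < r) :
    x ^ (r - 1) * x = x ^ r := by
  rcases eq_or_lt_of_le hx with h | h
  · rw [← h, Real.zero_rpow (by linarith : r - 1 ≠ 0),
      Real.zero_rpow (by linarith : r ≠ 0), zero_mul]
  · have h2 := Real.rpow_add h (r - 1) 1
    rw [Real.rpow_one, show r - 1 + 1 = r by ring] at h2
    exact h2.symm

lemma lag_bdd {N : ℕ} {H : EuclideanSpace ℝ (Fin N) → ℝ} {r C : ℝ}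
    (hr : 1 < r) (hC : 0 < C) (hlow : ∀ p, C⁻¹ * ‖p‖ ^ r - C ≤ H p)
    (ξ : EuclideanSpace ℝ (Fin N)) :
    BddAbove (Set.range fun p => -⟪ξ, p⟫ - H p) := by
  refine ⟨‖ξ‖ * (‖ξ‖ * C) ^ (r - 1)⁻¹ + C, ?_⟩
  rintro x ⟨p, rfl⟩
  show -⟪ξ, p⟫ - H p ≤ _
  have hCS : -⟪ξ, p⟫ ≤ ‖ξ‖ * ‖p‖ := by
    have h1 := abs_real_inner_le_norm ξ p
    have h2 := neg_abs_le (⟪ξ, p⟫)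
    linarith
  have hH := hlow p
  have hp0 : (0:ℝ) ≤ ‖p‖ := norm_nonneg p
  have hnn : 0 ≤ ‖ξ‖ * (‖ξ‖ * C) ^ (r - 1)⁻¹ :=
    mul_nonneg (norm_nonneg _) (Real.rpow_nonneg (mul_nonneg (norm_nonneg _) hC.le) _)
  have h2 := rpow_sub_one_mul' hp0 hr
  by_cases hcase : ‖ξ‖ ≤ C⁻¹ * ‖p‖ ^ (r - 1)
  · have h1 : ‖ξ‖ * ‖p‖ ≤ C⁻¹ * ‖p‖ ^ r := by
      calc ‖ξ‖ * ‖p‖ ≤ C⁻¹ * ‖p‖ ^ (r - 1) * ‖p‖ := mul_le_mul_of_nonneg_right hcase hp0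
        _ = C⁻¹ * ‖p‖ ^ r := by rw [mul_assoc, h2]
    linarith
  · push_neg at hcase
    have h3 : ‖p‖ ^ (r - 1) < ‖ξ‖ * C := by
      have := (inv_mul_lt_iff₀ hC).mp hcase
      linarith
    have h4 : ‖p‖ ≤ (‖ξ‖ * C) ^ (r - 1)⁻¹ := by
      have h5 := Real.rpow_le_rpow (Real.rpow_nonneg hp0 _) h3.le
        (inv_nonneg.mpr (by linarith : (0:ℝ) ≤ r - 1))
      rwa [← Real.rpow_mul hp0, mul_inv_cancel₀ (by linarith : r - 1 ≠ 0), Real.rpow_one] at h5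
    have h5 : 0 ≤ C⁻¹ * ‖p‖ ^ r := by positivity
    have h6 := mul_le_mul_of_nonneg_left h4 (norm_nonneg ξ)
    linarith

lemma lag_ge_neg {N : ℕ} {H : EuclideanSpace ℝ (Fin N) → ℝ} {r C : ℝ}
    (hr : 1 < r) (hC : 0 < C) (hlow : ∀ p, C⁻¹ * ‖p‖ ^ r - C ≤ H p)
    (hup : ∀ p, H p ≤ C * (‖p‖ ^ r + 1))
    (ξ : EuclideanSpace ℝ (Fin N)) : -C ≤ LagOf N H ξ := by
  have h0 : -⟪ξ, (0 : EuclideanSpace ℝ (Fin N))⟫ - H 0 ≤ LagOf N H ξ :=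
    le_csSup (lag_bdd hr hC hlow ξ) ⟨0, rfl⟩
  have hH0 : H 0 ≤ C := by
    have := hup 0
    rw [norm_zero, Real.zero_rpow (by linarith : r ≠ 0)] at this
    linarith
  rw [inner_zero_right] at h0
  linarith

lemma lag_ge_rpow {N : ℕ} {H : EuclideanSpace ℝ (Fin N) → ℝ} {r C : ℝ}
    (hr : 1 < r) (hC : 0 < C) (hlow : ∀ p, C⁻¹ * ‖p‖ ^ r - C ≤ H p)
    (hup : ∀ p, H p ≤ C * (‖p‖ ^ r + 1))
    (ξ : EuclideanSpace ℝ (Fin N)) :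
    C * (‖ξ‖ / (2 * C)) ^ (r / (r - 1)) - C ≤ LagOf N H ξ := by
  rcases eq_or_ne ξ 0 with h | h
  · rw [h, norm_zero, zero_div, Real.zero_rpow (by
      have h1 : 0 < r - 1 := by linarith
      positivity : r / (r - 1) ≠ 0), mul_zero, zero_sub]
    exact lag_ge_neg hr hC hlow hup 0
  · have hξ : 0 < ‖ξ‖ := norm_pos_iff.mpr h
    have hx0 : 0 < ‖ξ‖ / (2 * C) := by positivity
    set x : ℝ := ‖ξ‖ / (2 * C) with hxdef
    set t : ℝ := x ^ (r - 1)⁻¹ with htdef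
    have ht : 0 < t := Real.rpow_pos_of_pos hx0 _
    have hr1 : (0:ℝ) < r - 1 := by linarith
    have htr1 : t ^ (r - 1) = x := by
      rw [htdef, ← Real.rpow_mul hx0.le, inv_mul_cancel₀ hr1.ne', Real.rpow_one]
    have htr : t ^ r = x ^ (r / (r - 1)) := by
      rw [htdef, ← Real.rpow_mul hx0.le]
      congr 1
      field_simp
    set p : EuclideanSpace ℝ (Fin N) := (-(t * ‖ξ‖⁻¹)) • ξ with hpdef
    have hip : -⟪ξ, p⟫ = t * ‖ξ‖ := by
      rw [hpdef, real_inner_smul_right, real_inner_self_eq_norm_mul_norm]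
      field_simp
    have hnp : ‖p‖ = t := by
      rw [hpdef, norm_smul, Real.norm_eq_abs, abs_neg, abs_of_pos (by positivity)]
      field_simp
    have hle : -⟪ξ, p⟫ - H p ≤ LagOf N H ξ := le_csSup (lag_bdd hr hC hlow ξ) ⟨p, rfl⟩
    have hHp := hup p
    rw [hnp] at hHp
    rw [hip] at hle
    have key : t * ‖ξ‖ = 2 * C * t ^ r := by
      have h1 : ‖ξ‖ = 2 * C * x := by rw [hxdef]; field_simp
      calc t * ‖ξ‖ = 2 * C * (t ^ (r - 1) * t) := by rw [htr1, h1]; ring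
        _ = 2 * C * t ^ r := by rw [rpow_sub_one_mul' ht.le hr]
    rw [← htr]
    nlinarith [Real.rpow_nonneg (le_of_lt ht) r]

theorem stmt2
    (N : ℕ) (hN : 1 ≤ N)
    (Ω : Set (EuclideanSpace ℝ (Fin N)))
    (hΩopen : IsOpen Ω) (hΩbdd : Bornology.IsBounded Ω)
    (T : ℝ) (hT : 0 < T)
    (r q C : ℝ) (hr : 1 < r) (hq : 1 < q) (hC : 0 < C)
    (H : EuclideanSpace ℝ (Fin N) → ℝ)
    (hHsc : ∀ p₁ p₂ : EuclideanSpace ℝ (Fin N), p₁ ≠ p₂ → ∀ l ∈ Set.Ioo (0:ℝ) 1,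
      H (l • p₁ + (1 - l) • p₂) < l * H p₁ + (1 - l) * H p₂)
    (hHdiff : Differentiable ℝ H)
    (hHg : ∀ p : EuclideanSpace ℝ (Fin N),
      C⁻¹ * ‖p‖ ^ r - C ≤ H p ∧ H p ≤ C * (‖p‖ ^ r + 1))
    (f : ℝ × EuclideanSpace ℝ (Fin N) → ℝ → ℝ)
    (hfc : ContinuousOn (fun zs : (ℝ × EuclideanSpace ℝ (Fin N)) × ℝ => f zs.1 zs.2)
      ((cylQT N T Ω) ×ˢ Set.Ici 0))
    (hfmono : ∀ z ∈ cylQT N T Ω, StrictMonoOn (f z) (Set.Ici 0))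
    (hfg : ∀ z ∈ cylQT N T Ω, ∀ s : ℝ, 0 ≤ s →
      C⁻¹ * s ^ (q - 1) - C ≤ f z s ∧ f z s ≤ C * (s ^ (q - 1) + 1))
    (m₀ : EuclideanSpace ℝ (Fin N) → ℝ)
    (hm₀int : IntegrableOn m₀ Ω)
    (hm₀pos : ∀ᵐ x ∂(volume.restrict Ω), 0 ≤ m₀ x)
    (j : ℝ × EuclideanSpace ℝ (Fin N) → ℝ)
    (hjcont : ContinuousOn j (latBdry N T Ω))
    (hjpos : ∀ p ∈ latBdry N T Ω, 0 ≤ j p)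
    (hjint : IntegrableOn j (latBdry N T Ω) (bdryMeas N))
    (m : ℝ × EuclideanSpace ℝ (Fin N) → ℝ)
    (w : ℝ × EuclideanSpace ℝ (Fin N) → EuclideanSpace ℝ (Fin N))
    (hmem : memMM N T Ω m₀ j m w)
    -- finiteness of ∫∫ [ m L(w/m) + F(t,x,m) ]: the `+∞` convention forces
    -- `w = 0` a.e. on `{m = 0}`, and the resulting function is integrable
    (hconv : ∀ᵐ z ∂(volume.restrict (cylQT N T Ω)), m z = 0 → w z = 0)
    (hfin : IntegrableOn
      (fun z => (if 0 < m z then m z * LagOf N H ((m z)⁻¹ • w z) else 0)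
        + ∫ u in (0:ℝ)..(m z), f z u) (cylQT N T Ω)) :
    MemLp m (ENNReal.ofReal q) (volume.restrict (cylQT N T Ω)) ∧
    MemLp w (ENNReal.ofReal (q * r / (q * r - q + 1)))
      (volume.restrict (cylQT N T Ω)) := by
  classical
  obtain ⟨hmInt, hwInt, hmpos, -⟩ := hmem
  set QT := cylQT N T Ω with hQTdef
  have hQTmeas : MeasurableSet QT := measurableSet_Icc.prod hΩopen.measurableSet
  set μ := volume.restrict QT with hμdef
  have hq0 : (0:ℝ) < q := by linarith
  have hr0 : (0:ℝ) < r := by linarith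
  have hr1 : (0:ℝ) < r - 1 := by linarith
  set r' : ℝ := r / (r - 1) with hr'def
  have hr'1 : 1 < r' := (one_lt_div hr1).2 (by linarith)
  have hr'0 : 0 < r' := by linarith
  have hD : (0:ℝ) < q * r - q + 1 := by nlinarith
  set β : ℝ := q * r / (q * r - q + 1) with hβdef
  have hβ1 : 1 < β := (one_lt_div hD).2 (by nlinarith)
  have hβ0 : 0 < β := by linarith
  have hβr' : β < r' := by
    rw [hβdef, hr'def, div_lt_div_iff₀ hD hr1]
    nlinarith
  have hlow : ∀ p, C⁻¹ * ‖p‖ ^ r - C ≤ H p := fun p => (hHg p).1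
  have hup : ∀ p, H p ≤ C * (‖p‖ ^ r + 1) := fun p => (hHg p).2
  have hLagC : ∀ ξ, -C ≤ LagOf N H ξ := lag_ge_neg hr hC hlow hup
  set c₁ : ℝ := C * ((2 * C)⁻¹) ^ r' with hc₁def
  have hc₁ : 0 < c₁ := by
    have : (0:ℝ) < ((2 * C)⁻¹) ^ r' := Real.rpow_pos_of_pos (by positivity) _
    positivity
  have hLag : ∀ ξ, c₁ * ‖ξ‖ ^ r' - C ≤ LagOf N H ξ := by
    intro ξ
    have h1 := lag_ge_rpow hr hC hlow hup ξ
    rw [← hr'def] at h1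
    have h2 : (‖ξ‖ / (2 * C)) ^ r' = ‖ξ‖ ^ r' * ((2 * C)⁻¹) ^ r' := by
      rw [div_eq_mul_inv, Real.mul_rpow (norm_nonneg _) (by positivity)]
    rw [h2] at h1
    calc c₁ * ‖ξ‖ ^ r' - C = C * (‖ξ‖ ^ r' * ((2 * C)⁻¹) ^ r') - C := by
          rw [hc₁def]; ring
      _ ≤ LagOf N H ξ := h1
  -- lower bound on the F-part
  have hFlow : ∀ᵐ z ∂μ, C⁻¹ * m z ^ q / q - C * m z ≤ ∫ u in (0:ℝ)..(m z), f z u := by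
    filter_upwards [hmpos, ae_restrict_mem hQTmeas] with z hm0 hzQT
    have hcf : ContinuousOn (fun u => f z u) (Set.Icc 0 (m z)) := by
      have hmap : Set.MapsTo (fun u : ℝ => ((z, u) : (ℝ × EuclideanSpace ℝ (Fin N)) × ℝ))
          (Set.Icc 0 (m z)) ((cylQT N T Ω) ×ˢ Set.Ici 0) :=
        fun u hu => Set.mk_mem_prod hzQT hu.1
      exact hfc.comp (Continuous.prodMk_right z).continuousOn hmap
    have hint1 : IntervalIntegrable (f z) volume 0 (m z) := hcf.intervalIntegrable_of_Icc hm0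
    have hcp : ContinuousOn (fun u : ℝ => u ^ (q - 1)) (Set.Icc 0 (m z)) := fun u _ =>
      (Real.continuousAt_rpow_const u (q - 1) (Or.inr (by linarith))).continuousWithinAt
    have hint2 : IntervalIntegrable (fun u : ℝ => u ^ (q - 1)) volume 0 (m z) :=
      hcp.intervalIntegrable_of_Icc hm0
    have hint3 : IntervalIntegrable (fun u : ℝ => C⁻¹ * u ^ (q - 1) - C) volume 0 (m z) :=
      ((hint2.const_mul _).sub intervalIntegrable_const)
    have hmono : (∫ u in (0:ℝ)..(m z), (C⁻¹ * u ^ (q - 1) - C)) ≤ ∫ u in (0:ℝ)..(m z), f z u :=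
      intervalIntegral.integral_mono_on hm0 hint3 hint1 (fun u hu => (hfg z hzQT u hu.1).1)
    have hval : (∫ u in (0:ℝ)..(m z), (C⁻¹ * u ^ (q - 1) - C)) = C⁻¹ * m z ^ q / q - C * m z := by
      rw [intervalIntegral.integral_sub (hint2.const_mul _) intervalIntegrable_const,
        intervalIntegral.integral_const_mul, integral_rpow (Or.inl (by linarith : (-1:ℝ) < q - 1)),
        intervalIntegral.integral_const, Real.zero_rpow (by linarith : q - 1 + 1 ≠ 0),
        show q - 1 + 1 = q by ring]
      simp only [smul_eq_mul, sub_zero]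
      ring
    rw [hval] at hmono
    exact hmono
  set t1 : ℝ × EuclideanSpace ℝ (Fin N) → ℝ :=
    fun z => if 0 < m z then m z * LagOf N H ((m z)⁻¹ • w z) else 0 with ht1def
  set g : ℝ × EuclideanSpace ℝ (Fin N) → ℝ :=
    fun z => ((t1 z) + ∫ u in (0:ℝ)..(m z), f z u) + (2 * C) * m z with hgdef
  have hgint : Integrable g μ := hfin.add (hmInt.const_mul (2 * C))
  have ht1C : ∀ᵐ z ∂μ, -(C * m z) ≤ t1 z := by
    filter_upwards [hmpos] with z h0
    rw [ht1def]
    dsimp only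
    by_cases hcm : 0 < m z
    · rw [if_pos hcm]
      have := hLagC ((m z)⁻¹ • w z)
      nlinarith
    · rw [if_neg hcm]
      have hm0 : m z = 0 := le_antisymm (not_lt.1 hcm) h0
      rw [hm0]
      simp
  have hglow : ∀ᵐ z ∂μ, C⁻¹ * m z ^ q / q ≤ g z := by
    filter_upwards [ht1C, hFlow] with z h1 h2
    rw [hgdef]
    dsimp only
    linarith
  have hmq_le : ∀ᵐ z ∂μ, m z ^ q ≤ (q * C) * g z := by
    filter_upwards [hglow] with z h1
    have h2 : m z ^ q = (q * C) * (C⁻¹ * m z ^ q / q) := by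
      field_simp
    rw [h2]
    exact mul_le_mul_of_nonneg_left h1 (by positivity)
  have hmq_meas : AEStronglyMeasurable (fun z => m z ^ q) μ :=
    (hmInt.aemeasurable.pow aemeasurable_const).aestronglyMeasurable
  have hmq_int : Integrable (fun z => m z ^ q) μ := by
    refine Integrable.mono' (hgint.const_mul (q * C)) hmq_meas ?_
    filter_upwards [hmq_le, hmpos] with z h1 h2
    rw [Real.norm_eq_abs, abs_of_nonneg (Real.rpow_nonneg h2 q)]
    exact h1
  have hq_ne : ENNReal.ofReal q ≠ 0 := by
    simp only [ne_eq, ENNReal.ofReal_eq_zero, not_le]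
    linarith
  have hmemm : MemLp m (ENNReal.ofReal q) μ := by
    refine ⟨hmInt.aestronglyMeasurable, ?_⟩
    rw [eLpNorm_lt_top_iff_lintegral_rpow_enorm_lt_top hq_ne ENNReal.ofReal_ne_top,
      ENNReal.toReal_ofReal hq0.le]
    have heq : ∀ᵐ z ∂μ, ‖m z‖ₑ ^ q = ENNReal.ofReal (m z ^ q) := by
      filter_upwards [hmpos] with z h2
      rw [← ofReal_norm, Real.norm_eq_abs, abs_of_nonneg h2,
        ENNReal.ofReal_rpow_of_nonneg h2 hq0.le]
    calc (∫⁻ z, ‖m z‖ₑ ^ q ∂μ) = ∫⁻ z, ENNReal.ofReal (m z ^ q) ∂μ :=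
          lintegral_congr_ae heq
      _ < ⊤ := hmq_int.lintegral_lt_top
  -- the function φ
  set φ : ℝ × EuclideanSpace ℝ (Fin N) → ℝ :=
    fun z => if 0 < m z then m z ^ (1 - r') * ‖w z‖ ^ r' else 0 with hφdef
  have hφnonneg : ∀ z, 0 ≤ φ z := by
    intro z
    rw [hφdef]
    dsimp only
    split
    · positivity
    · exact le_refl 0
  have hφmeas : AEStronglyMeasurable φ μ := by
    have hΦ : Measurable (fun p : ℝ × ℝ => if 0 < p.1 then p.1 ^ (1 - r') * p.2 ^ r' else 0) :=
      Measurable.ite (measurableSet_lt measurable_const measurable_fst)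
        ((measurable_fst.pow measurable_const).mul (measurable_snd.pow measurable_const))
        measurable_const
    exact (hΦ.comp_aemeasurable (hmInt.aemeasurable.prodMk
      hwInt.aestronglyMeasurable.norm.aemeasurable)).aestronglyMeasurable
  have ht1φ : ∀ᵐ z ∂μ, c₁ * φ z - C * m z ≤ t1 z := by
    filter_upwards [hmpos] with z h0
    rw [ht1def, hφdef]
    dsimp only
    by_cases hcm : 0 < m z
    · rw [if_pos hcm, if_pos hcm]
      have h1 := hLag ((m z)⁻¹ • w z)
      have h2 : ‖(m z)⁻¹ • w z‖ = (m z)⁻¹ * ‖w z‖ := by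
        rw [norm_smul, Real.norm_eq_abs, abs_of_pos (inv_pos.2 hcm)]
      rw [h2] at h1
      have h3 : ((m z)⁻¹ * ‖w z‖) ^ r' = ((m z)⁻¹) ^ r' * ‖w z‖ ^ r' :=
        Real.mul_rpow (inv_nonneg.2 h0) (norm_nonneg _)
      have h4 : m z * (((m z)⁻¹) ^ r' * ‖w z‖ ^ r') = m z ^ (1 - r') * ‖w z‖ ^ r' := by
        rw [Real.rpow_sub hcm, Real.rpow_one, Real.inv_rpow h0, div_eq_mul_inv]
        ring
      calc c₁ * (m z ^ (1 - r') * ‖w z‖ ^ r') - C * m z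
          = m z * (c₁ * (((m z)⁻¹) ^ r' * ‖w z‖ ^ r') - C) := by rw [← h4]; ring
        _ ≤ m z * LagOf N H ((m z)⁻¹ • w z) := by
            apply mul_le_mul_of_nonneg_left _ h0
            rw [← h3]
            exact h1
    · rw [if_neg hcm, if_neg hcm]
      have hm0 : m z = 0 := le_antisymm (not_lt.1 hcm) h0
      rw [hm0]
      simp
  have hφle : ∀ᵐ z ∂μ, φ z ≤ c₁⁻¹ * g z := by
    filter_upwards [ht1φ, hFlow, hmpos] with z h1 h2 h0
    have h3 : c₁ * φ z ≤ g z := by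
      rw [hgdef]
      dsimp only
      have h4 : 0 ≤ C⁻¹ * m z ^ q / q := by positivity
      linarith
    calc φ z = c₁⁻¹ * (c₁ * φ z) := by field_simp
      _ ≤ c₁⁻¹ * g z := mul_le_mul_of_nonneg_left h3 (inv_nonneg.2 hc₁.le)
  have hφint : Integrable φ μ := by
    refine Integrable.mono' (hgint.const_mul c₁⁻¹) hφmeas ?_
    filter_upwards [hφle] with z h1
    rw [Real.norm_eq_abs, abs_of_nonneg (hφnonneg z)]
    exact h1
  -- Hölder
  set a : ℝ := β / r' with hadef
  have ha0 : 0 < a := div_pos hβ0 hr'0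
  have ha1 : a < 1 := (div_lt_one hr'0).2 hβr'
  have hconj : Real.HolderConjugate a⁻¹ (1 - a)⁻¹ := by
    rw [Real.holderConjugate_iff]
    constructor
    · exact (one_lt_inv₀ ha0).2 ha1
    · rw [inv_inv, inv_inv]
      ring
  set G : ℝ × EuclideanSpace ℝ (Fin N) → ℝ≥0∞ := fun z => ENNReal.ofReal (φ z) with hGdef
  set Mq : ℝ × EuclideanSpace ℝ (Fin N) → ℝ≥0∞ := fun z => ENNReal.ofReal (m z ^ q) with hMqdef
  have hGmeas : AEMeasurable G μ := hφmeas.aemeasurable.ennreal_ofReal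
  have hMqmeas : AEMeasurable Mq μ := hmq_meas.aemeasurable.ennreal_ofReal
  have hGfin : (∫⁻ z, G z ∂μ) < ⊤ := hφint.lintegral_lt_top
  have hMqfin : (∫⁻ z, Mq z ∂μ) < ⊤ := hmq_int.lintegral_lt_top
  have hHold := ENNReal.lintegral_mul_le_Lp_mul_Lq μ hconj
    (hGmeas.pow aemeasurable_const : AEMeasurable (fun z => G z ^ a) μ)
    (hMqmeas.pow aemeasurable_const : AEMeasurable (fun z => Mq z ^ (1 - a)) μ)
  have hsimpf : ∀ z, (G z ^ a) ^ a⁻¹ = G z := by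
    intro z
    rw [← ENNReal.rpow_mul, mul_inv_cancel₀ ha0.ne', ENNReal.rpow_one]
  have hsimpg : ∀ z, (Mq z ^ (1 - a)) ^ (1 - a)⁻¹ = Mq z := by
    intro z
    rw [← ENNReal.rpow_mul, mul_inv_cancel₀ (by linarith : 1 - a ≠ 0), ENNReal.rpow_one]
  have hkey : (1 - r') * a + q * (1 - a) = 0 := by
    rw [hadef, hβdef, hr'def]
    field_simp
    ring
  have hpt : ∀ᵐ z ∂μ, ENNReal.ofReal (‖w z‖ ^ β)
      ≤ ((fun z => G z ^ a) * fun z => Mq z ^ (1 - a)) z := by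
    filter_upwards [hmpos, hconv] with z h0 hcv
    simp only [Pi.mul_apply]
    by_cases hcm : 0 < m z
    · have hφz : φ z = m z ^ (1 - r') * ‖w z‖ ^ r' := by
        rw [hφdef]
        dsimp only
        rw [if_pos hcm]
      have e1 : G z ^ a = ENNReal.ofReal ((m z ^ (1 - r') * ‖w z‖ ^ r') ^ a) := by
        rw [hGdef]
        dsimp only
        rw [ENNReal.ofReal_rpow_of_nonneg (hφnonneg z) ha0.le, hφz]
      have e2 : (m z ^ (1 - r') * ‖w z‖ ^ r') ^ a = m z ^ ((1 - r') * a) * ‖w z‖ ^ β := by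
        rw [Real.mul_rpow (Real.rpow_nonneg h0 _) (Real.rpow_nonneg (norm_nonneg _) _),
          ← Real.rpow_mul h0, ← Real.rpow_mul (norm_nonneg _)]
        congr 1
        rw [hadef]
        field_simp
      have e3 : Mq z ^ (1 - a) = ENNReal.ofReal (m z ^ (q * (1 - a))) := by
        rw [hMqdef]
        dsimp only
        rw [ENNReal.ofReal_rpow_of_nonneg (Real.rpow_nonneg h0 q) (by linarith : (0:ℝ) ≤ 1 - a),
          ← Real.rpow_mul h0]
      rw [e1, e2, e3, ← ENNReal.ofReal_mul (by positivity)]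
      apply le_of_eq
      congr 1
      rw [show m z ^ ((1 - r') * a) * ‖w z‖ ^ β * m z ^ (q * (1 - a))
          = m z ^ ((1 - r') * a) * m z ^ (q * (1 - a)) * ‖w z‖ ^ β by ring,
        ← Real.rpow_add hcm, hkey, Real.rpow_zero, one_mul]
    · have hm0 : m z = 0 := le_antisymm (not_lt.1 hcm) h0
      rw [hcv hm0, norm_zero, Real.zero_rpow hβ0.ne', ENNReal.ofReal_zero]
      exact bot_le
  have hwfin : (∫⁻ z, ENNReal.ofReal (‖w z‖ ^ β) ∂μ) < ⊤ := by
    calc (∫⁻ z, ENNReal.ofReal (‖w z‖ ^ β) ∂μ)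
        ≤ ∫⁻ z, ((fun z => G z ^ a) * fun z => Mq z ^ (1 - a)) z ∂μ := lintegral_mono_ae hpt
      _ ≤ (∫⁻ z, (G z ^ a) ^ a⁻¹ ∂μ) ^ (1 / a⁻¹)
          * (∫⁻ z, (Mq z ^ (1 - a)) ^ (1 - a)⁻¹ ∂μ) ^ (1 / (1 - a)⁻¹) := hHold
      _ = (∫⁻ z, G z ∂μ) ^ a * (∫⁻ z, Mq z ∂μ) ^ (1 - a) := by
          simp only [hsimpf, hsimpg, one_div, inv_inv]
      _ < ⊤ := ENNReal.mul_lt_top (ENNReal.rpow_lt_top_of_nonneg ha0.le hGfin.ne)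
          (ENNReal.rpow_lt_top_of_nonneg (by linarith : (0:ℝ) ≤ 1 - a) hMqfin.ne)
  refine ⟨hmemm, hwInt.aestronglyMeasurable, ?_⟩
  have hβ_ne : ENNReal.ofReal β ≠ 0 := by
    simp only [ne_eq, ENNReal.ofReal_eq_zero, not_le]
    linarith
  rw [eLpNorm_lt_top_iff_lintegral_rpow_enorm_lt_top hβ_ne ENNReal.ofReal_ne_top,
    ENNReal.toReal_ofReal hβ0.le]
  calc (∫⁻ z, ‖w z‖ₑ ^ β ∂μ) = ∫⁻ z, ENNReal.ofReal (‖w z‖ ^ β) ∂μ := by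
        apply lintegral_congr
        intro z
        rw [← ofReal_norm, ENNReal.ofReal_rpow_of_nonneg (norm_nonneg _) hβ0.le]
    _ < ⊤ := hwfin


end
end

section
/- Every (m,w) ∈ 𝓜 satisfies the L¹ bound ‖m‖_{L¹(Q_T)} ≤ T ( ‖m₀‖_{L¹(Ω)} + ‖j‖_{L¹((0,T)×∂Ω, dσ dt)} ). -/
/-!
Test the weak formulation against `ξ(t, x) = T - t`, which vanishes at `t = T` and has
`∂ₜξ = -1`, `∇ₓξ = 0`. This gives the mass identity `∫ m = T ∫ m₀ + ∫ j (T - t)`, and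
`0 ≤ T - t ≤ T` on `[0, T]` bounds the boundary term by `T ∫ |j|`.
-/

open MeasureTheory Set
open scoped ENNReal NNReal

noncomputable section

theorem integral_mul_le_mul_integral_abs {α : Type*} [MeasurableSpace α] {μ : Measure α}
    {f g : α → ℝ} {C : ℝ} (hf : Integrable f μ) (hg : ∀ᵐ x ∂μ, |g x| ≤ C) :
    ∫ x, f x * g x ∂μ ≤ C * ∫ x, |f x| ∂μ := by
  rw [← integral_const_mul]
  calc ∫ x, f x * g x ∂μ ≤ ∫ x, |f x * g x| ∂μ :=
        (le_abs_self _).trans <| by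
          simpa only [Real.norm_eq_abs] using
            norm_integral_le_integral_norm (μ := μ) (fun x => f x * g x)
    _ ≤ ∫ x, C * |f x| ∂μ := by
        refine integral_mono_of_nonneg (.of_forall fun _ => abs_nonneg _)
          (hf.abs.const_mul C) ?_
        filter_upwards [hg] with x hx
        rw [abs_mul, mul_comm]
        exact mul_le_mul_of_nonneg_right hx (abs_nonneg _)

theorem integral_abs_eq_integral_of_ae_nonneg {α : Type*} [MeasurableSpace α] {μ : Measure α}
    {f : α → ℝ} (hf : ∀ᵐ x ∂μ, 0 ≤ f x) : ∫ x, |f x| ∂μ = ∫ x, f x ∂μ :=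
  integral_congr_ae (hf.mono fun _ hx => abs_of_nonneg hx)

theorem lipschitzWith_const_sub_fst {E : Type*} [PseudoEMetricSpace E] (T : ℝ) :
    LipschitzWith 1 (fun z : ℝ × E => T - z.1) := by
  simpa using (LipschitzWith.const T).sub (LipschitzWith.prod_fst (α := ℝ) (β := E))

section SpaceTime

variable {E : Type*} [NormedAddCommGroup E] [NormedSpace ℝ E]

theorem fderiv_const_sub_fst (T : ℝ) (z : ℝ × E) :
    fderiv ℝ (fun z : ℝ × E => T - z.1) z = -ContinuousLinearMap.fst ℝ ℝ E :=
  (hasFDerivAt_fst.const_sub T).fderiv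

theorem integral_transport_const_sub_fst [MeasurableSpace (ℝ × E)] (μ : Measure (ℝ × E))
    (T : ℝ) (m : ℝ × E → ℝ) (w : ℝ × E → E) :
    ∫ z, (m z * fderiv ℝ (fun z : ℝ × E => T - z.1) z (1, 0)
        + fderiv ℝ (fun z : ℝ × E => T - z.1) z (0, w z)) ∂μ = -∫ z, m z ∂μ := by
  rw [← integral_neg]
  congr 1 with z
  simp [fderiv_const_sub_fst]

end SpaceTime

theorem stmt3_general
    (N : ℕ)
    (Ω : Set (EuclideanSpace ℝ (Fin N)))
    (T : ℝ)
    (m₀ : EuclideanSpace ℝ (Fin N) → ℝ)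
    (hm₀pos : ∀ᵐ x ∂(volume.restrict Ω), 0 ≤ m₀ x)
    (j : ℝ × EuclideanSpace ℝ (Fin N) → ℝ)
    (hjint : IntegrableOn j (Set.Icc 0 T ×ˢ frontier Ω)
      ((volume : Measure ℝ).prod (μH[(N : ℝ) - 1])))
    (m : ℝ × EuclideanSpace ℝ (Fin N) → ℝ)
    (w : ℝ × EuclideanSpace ℝ (Fin N) → EuclideanSpace ℝ (Fin N))
    (hmpos : ∀ᵐ z ∂(volume.restrict (Set.Icc 0 T ×ˢ Ω)), 0 ≤ m z)
    (hFP : ∀ ξ : ℝ × EuclideanSpace ℝ (Fin N) → ℝ,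
      (∃ K : ℝ≥0, LipschitzWith K ξ) →
      (∀ x, ξ (T, x) = 0) →
      (∫ z in Set.Icc 0 T ×ˢ Ω,
          (m z * fderiv ℝ ξ z (1, 0) + fderiv ℝ ξ z (0, w z)))
        + (∫ x in Ω, ξ (0, x) * m₀ x)
        + (∫ p in Set.Icc 0 T ×ˢ frontier Ω, j p * ξ p
            ∂((volume : Measure ℝ).prod (μH[(N : ℝ) - 1]))) = 0) :
    (∫ z in Set.Icc 0 T ×ˢ Ω, |m z|)
      ≤ T * ((∫ x in Ω, |m₀ x|)
        + (∫ p in Set.Icc 0 T ×ˢ frontier Ω, |j p|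
            ∂((volume : Measure ℝ).prod (μH[(N : ℝ) - 1])))) := by
  have mass := hFP (fun z => T - z.1) ⟨1, lipschitzWith_const_sub_fst T⟩ (fun _ => sub_self T)
  simp only [integral_transport_const_sub_fst, sub_zero, integral_const_mul] at mass
  have boundary := integral_mul_le_mul_integral_abs (g := fun p => T - p.1) (C := T) hjint
    (ae_restrict_of_forall_mem (measurableSet_Icc.prod isClosed_frontier.measurableSet)
      fun p hp => abs_le.2 ⟨by linarith [hp.1.1, hp.1.2], by linarith [hp.1.1]⟩)
  rw [integral_abs_eq_integral_of_ae_nonneg hmpos, integral_abs_eq_integral_of_ae_nonneg hm₀pos]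
  linarith

theorem stmt3
    (N : ℕ) (hN : 1 ≤ N)
    (Ω : Set (EuclideanSpace ℝ (Fin N)))
    (hΩopen : IsOpen Ω) (hΩbdd : Bornology.IsBounded Ω)
    (T : ℝ) (hT : 0 < T)
    (m₀ : EuclideanSpace ℝ (Fin N) → ℝ)
    (hm₀int : IntegrableOn m₀ Ω)
    (hm₀pos : ∀ᵐ x ∂(volume.restrict Ω), 0 ≤ m₀ x)
    (j : ℝ × EuclideanSpace ℝ (Fin N) → ℝ)
    (hjcont : ContinuousOn j (Set.Icc 0 T ×ˢ frontier Ω))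
    (hjpos : ∀ p ∈ Set.Icc 0 T ×ˢ frontier Ω, 0 ≤ j p)
    (hjint : IntegrableOn j (Set.Icc 0 T ×ˢ frontier Ω)
      ((volume : Measure ℝ).prod (μH[(N : ℝ) - 1])))
    (m : ℝ × EuclideanSpace ℝ (Fin N) → ℝ)
    (w : ℝ × EuclideanSpace ℝ (Fin N) → EuclideanSpace ℝ (Fin N))
    (hmint : IntegrableOn m (Set.Icc 0 T ×ˢ Ω))
    (hwint : IntegrableOn w (Set.Icc 0 T ×ˢ Ω))
    (hmpos : ∀ᵐ z ∂(volume.restrict (Set.Icc 0 T ×ˢ Ω)), 0 ≤ m z)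
    (hFP : ∀ ξ : ℝ × EuclideanSpace ℝ (Fin N) → ℝ,
      (∃ K : ℝ≥0, LipschitzWith K ξ) →
      (∀ x, ξ (T, x) = 0) →
      (∫ z in Set.Icc 0 T ×ˢ Ω,
          (m z * fderiv ℝ ξ z (1, 0) + fderiv ℝ ξ z (0, w z)))
        + (∫ x in Ω, ξ (0, x) * m₀ x)
        + (∫ p in Set.Icc 0 T ×ˢ frontier Ω, j p * ξ p
            ∂((volume : Measure ℝ).prod (μH[(N : ℝ) - 1]))) = 0) :
    (∫ z in Set.Icc 0 T ×ˢ Ω, |m z|)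
      ≤ T * ((∫ x in Ω, |m₀ x|)
        + (∫ p in Set.Icc 0 T ×ˢ frontier Ω, |j p|
            ∂((volume : Measure ℝ).prod (μH[(N : ℝ) - 1])))) :=
  stmt3_general N Ω T m₀ hm₀pos j hjint m w hmpos hFP

end
end

section
/- Let H : ℝ^N → ℝ be convex with C⁻¹|p|^r − C ≤ H(p) for all p (C > 0, r > 1), and set L(ξ) = sup_{p∈ℝ^N}(−⟨ξ,p⟩ − H(p)), which is then real-valued. Let U ⊂ ℝ^N be open, a < b, v ∈ C¹([a,b]×U), and α : [a,b]×U → ℝ continuous with −∂_t v + H(∇_x v) ≤ α pointwise on [a,b]×U. Then for every C¹ curve x : [s,t] → U with [s,t] ⊆ [a,b], one has v(s, x(s)) ≤ v(t, x(t)) + ∫_s^t [ L(x'(τ)) + α(τ, x(τ)) ] dτ. -/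
open Set MeasureTheory
open scoped RealInnerProductSpace

noncomputable section

theorem stmt10 (N : ℕ) (C r : ℝ) (hC : 0 < C) (hr : 1 < r)
    (H : EuclideanSpace ℝ (Fin N) → ℝ) (hHconv : ConvexOn ℝ Set.univ H)
    (hHlb : ∀ p : EuclideanSpace ℝ (Fin N), C⁻¹ * ‖p‖ ^ r - C ≤ H p)
    (U : Set (EuclideanSpace ℝ (Fin N))) (hU : IsOpen U)
    (a b : ℝ) (hab : a < b)
    (v : ℝ × EuclideanSpace ℝ (Fin N) → ℝ) (hv : ContDiff ℝ 1 v)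
    (α : ℝ × EuclideanSpace ℝ (Fin N) → ℝ)
    (hα : ContinuousOn α (Set.Icc a b ×ˢ U))
    (hsub : ∀ z ∈ Set.Icc a b ×ˢ U,
      -(fderiv ℝ v z (1, 0)) + H (gradient (fun y => v (z.1, y)) z.2) ≤ α z) :
    (∀ ξ : EuclideanSpace ℝ (Fin N),
        BddAbove (Set.range fun p => -⟪ξ, p⟫ - H p)) ∧
    ∀ (s t : ℝ) (x : ℝ → EuclideanSpace ℝ (Fin N)),
      a ≤ s → s ≤ t → t ≤ b → ContDiffOn ℝ 1 x (Set.Icc s t) →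
      (∀ τ ∈ Set.Icc s t, x τ ∈ U) →
      v (s, x s) ≤ v (t, x t)
        + ∫ τ in s..t,
            (sSup (Set.range fun p => -⟪deriv x τ, p⟫ - H p) + α (τ, x τ)) := by
  have hr1 : (0:ℝ) < r - 1 := by linarith
  -- Part 1: boundedness
  have hbdd : ∀ ξ : EuclideanSpace ℝ (Fin N),
      BddAbove (Set.range fun p => -⟪ξ, p⟫ - H p) := by
    intro ξ
    set T : ℝ := (C * ‖ξ‖) ^ (1 / (r - 1)) with hTdef
    have hT0 : 0 ≤ T := Real.rpow_nonneg (by positivity) _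
    refine ⟨‖ξ‖ * T + C, ?_⟩
    rintro _ ⟨p, rfl⟩
    show -⟪ξ, p⟫ - H p ≤ ‖ξ‖ * T + C
    have h1 : -⟪ξ, p⟫ ≤ ‖ξ‖ * ‖p‖ := by
      have h := abs_real_inner_le_norm ξ p
      have := neg_abs_le (⟪ξ, p⟫)
      linarith
    have h2 : ‖ξ‖ * ‖p‖ - C⁻¹ * ‖p‖ ^ r ≤ ‖ξ‖ * T := by
      rcases le_or_gt ‖p‖ T with hpT | hpT
      · have hle : ‖ξ‖ * ‖p‖ ≤ ‖ξ‖ * T :=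
          mul_le_mul_of_nonneg_left hpT (norm_nonneg ξ)
        have hge : (0:ℝ) ≤ C⁻¹ * ‖p‖ ^ r := by
          have := Real.rpow_nonneg (norm_nonneg p) r
          positivity
        linarith
      · have hp0 : (0:ℝ) < ‖p‖ := lt_of_le_of_lt hT0 hpT
        have hTr : T ^ (r - 1) = C * ‖ξ‖ := by
          rw [hTdef, ← Real.rpow_mul (by positivity), one_div,
            inv_mul_cancel₀ (ne_of_gt hr1), Real.rpow_one]
        have hmono : T ^ (r - 1) ≤ ‖p‖ ^ (r - 1) :=
          Real.rpow_le_rpow hT0 hpT.le hr1.le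
        have hsplit : ‖p‖ ^ r = ‖p‖ ^ (r - 1) * ‖p‖ := by
          have h := Real.rpow_add hp0 (r - 1) 1
          rw [Real.rpow_one, show r - 1 + 1 = r from by ring] at h
          exact h
        have : ‖ξ‖ * ‖p‖ ≤ C⁻¹ * ‖p‖ ^ r := by
          rw [hsplit]
          rw [hTr] at hmono
          have h3 : C * ‖ξ‖ * ‖p‖ ≤ ‖p‖ ^ (r - 1) * ‖p‖ :=
            mul_le_mul_of_nonneg_right hmono hp0.le
          calc ‖ξ‖ * ‖p‖ = C⁻¹ * (C * ‖ξ‖ * ‖p‖) := by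
                field_simp
            _ ≤ C⁻¹ * (‖p‖ ^ (r - 1) * ‖p‖) :=
                mul_le_mul_of_nonneg_left h3 (by positivity)
        have : ‖ξ‖ * ‖p‖ - C⁻¹ * ‖p‖ ^ r ≤ 0 := by linarith
        nlinarith [norm_nonneg ξ]
    have h3 := hHlb p
    linarith
  refine ⟨hbdd, ?_⟩
  -- the Lagrangian
  set L : EuclideanSpace ℝ (Fin N) → ℝ :=
    fun ξ => sSup (Set.range fun p => -⟪ξ, p⟫ - H p) with hLdef
  have hLge : ∀ ξ p : EuclideanSpace ℝ (Fin N), -⟪ξ, p⟫ - H p ≤ L ξ :=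
    fun ξ p => le_csSup (hbdd ξ) ⟨p, rfl⟩
  have hLconv : ConvexOn ℝ Set.univ L := by
    refine ⟨convex_univ, fun ξ _ η _ c d hc hd hcd => ?_⟩
    refine csSup_le (Set.range_nonempty _) ?_
    rintro _ ⟨p, rfl⟩
    show -⟪c • ξ + d • η, p⟫ - H p ≤ c • L ξ + d • L η
    have heq : -⟪c • ξ + d • η, p⟫ - H p
        = c * (-⟪ξ, p⟫ - H p) + d * (-⟪η, p⟫ - H p) := by
      rw [inner_add_left, real_inner_smul_left, real_inner_smul_left]
      linear_combination H p * hcd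
    rw [smul_eq_mul, smul_eq_mul, heq]
    have := mul_le_mul_of_nonneg_left (hLge ξ p) hc
    have := mul_le_mul_of_nonneg_left (hLge η p) hd
    linarith
  have hLcont : Continuous L := by
    rw [← continuousOn_univ]
    exact hLconv.continuousOn isOpen_univ
  intro s t x hs hst htb hx hxU
  rcases eq_or_lt_of_le hst with rfl | hst'
  · simp
  -- main case : s < t
  have huniq : UniqueDiffOn ℝ (Set.Icc s t) := uniqueDiffOn_Icc hst'
  set ξ' : ℝ → EuclideanSpace ℝ (Fin N) := derivWithin x (Set.Icc s t) with hξdef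
  have hξcont : ContinuousOn ξ' (Set.Icc s t) :=
    hx.continuousOn_derivWithin huniq le_rfl
  have hxcont : ContinuousOn x (Set.Icc s t) := hx.continuousOn
  have hccont : ContinuousOn (fun τ : ℝ => (τ, x τ)) (Set.Icc s t) :=
    continuousOn_id.prodMk hxcont
  have hIccsub : Set.Icc s t ⊆ Set.Icc a b := Set.Icc_subset_Icc hs htb
  have hmem : ∀ τ ∈ Set.Icc s t, (τ, x τ) ∈ Set.Icc a b ×ˢ U :=
    fun τ hτ => ⟨hIccsub hτ, hxU τ hτ⟩
  set g : ℝ → ℝ := fun τ => v (τ, x τ) with hgdef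
  set G : ℝ → ℝ := fun τ => (fderiv ℝ v (τ, x τ)) (1, ξ' τ) with hGdef
  have hGcont : ContinuousOn G (Set.Icc s t) := by
    apply ContinuousOn.clm_apply
    · exact ((hv.continuous_fderiv one_ne_zero).comp_continuousOn hccont)
    · exact continuousOn_const.prodMk hξcont
  set φ : ℝ → ℝ := fun τ => L (ξ' τ) + α (τ, x τ) with hφdef
  have hφcont : ContinuousOn φ (Set.Icc s t) := by
    apply ContinuousOn.add
    · exact hLcont.comp_continuousOn hξcont
    · exact hα.comp hccont hmem
  -- key pointwise inequality on all of Icc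
  have hkey : ∀ τ ∈ Set.Icc s t, -G τ ≤ φ τ := by
    intro τ hτ
    have hz : (τ, x τ) ∈ Set.Icc a b ×ˢ U := hmem τ hτ
    have hdv : DifferentiableAt ℝ v (τ, x τ) := (hv.differentiable one_ne_zero) _
    have hpart : fderiv ℝ (fun y => v (τ, y)) (x τ)
        = (fderiv ℝ v (τ, x τ)).comp (ContinuousLinearMap.inr ℝ ℝ _) := by
      have h1 : HasFDerivAt (fun y => v (τ, y))
          ((fderiv ℝ v (τ, x τ)).comp (ContinuousLinearMap.inr ℝ ℝ _)) (x τ) :=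
        HasFDerivAt.comp (x τ) hdv.hasFDerivAt (hasFDerivAt_prodMk_right τ (x τ))
      exact h1.fderiv
    have hinner : ⟪gradient (fun y => v (τ, y)) (x τ), ξ' τ⟫
        = (fderiv ℝ v (τ, x τ)) (0, ξ' τ) := by
      rw [gradient, InnerProductSpace.toDual_symm_apply, hpart]
      simp
    have hGsplit : G τ = (fderiv ℝ v (τ, x τ)) (1, 0)
        + ⟪gradient (fun y => v (τ, y)) (x τ), ξ' τ⟫ := by
      have hadd : ((1 : ℝ), ξ' τ) = ((1 : ℝ), (0 : EuclideanSpace ℝ (Fin N)))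
          + ((0 : ℝ), ξ' τ) := by simp
      show (fderiv ℝ v (τ, x τ)) (1, ξ' τ) = _
      rw [hadd, map_add, hinner]
    have h1 : -⟪ξ' τ, gradient (fun y => v (τ, y)) (x τ)⟫
        - H (gradient (fun y => v (τ, y)) (x τ)) ≤ L (ξ' τ) := hLge _ _
    have h2 := hsub (τ, x τ) hz
    simp only at h2
    have h3 : ⟪ξ' τ, gradient (fun y => v (τ, y)) (x τ)⟫
        = ⟪gradient (fun y => v (τ, y)) (x τ), ξ' τ⟫ := real_inner_comm _ _
    rw [hGsplit]
    show _ ≤ L (ξ' τ) + α (τ, x τ)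
    rw [h3] at h1
    linarith
  -- derivative of g on the interior
  have hg : ∀ τ ∈ Set.Ioo s t, HasDerivAt g (G τ) τ := by
    intro τ hτ
    have hmem' : Set.Icc s t ∈ nhds τ := Icc_mem_nhds hτ.1 hτ.2
    have hxd : DifferentiableAt ℝ x τ :=
      ((hx τ (Set.Ioo_subset_Icc_self hτ)).differentiableWithinAt one_ne_zero).differentiableAt hmem'
    have hderiv_eq : deriv x τ = ξ' τ := (derivWithin_of_mem_nhds hmem').symm
    have hx' : HasDerivAt x (ξ' τ) τ := hderiv_eq ▸ hxd.hasDerivAt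
    have hc : HasDerivAt (fun τ : ℝ => (τ, x τ)) ((1 : ℝ), ξ' τ) τ :=
      (hasDerivAt_id τ).prodMk hx'
    exact ((hv.differentiable one_ne_zero) (τ, x τ)).hasFDerivAt.comp_hasDerivAt τ hc
  have hGint : IntervalIntegrable G volume s t := by
    apply ContinuousOn.intervalIntegrable
    rwa [Set.uIcc_of_le hst]
  have hφint : IntervalIntegrable φ volume s t := by
    apply ContinuousOn.intervalIntegrable
    rwa [Set.uIcc_of_le hst]
  have hgcont : ContinuousOn g (Set.Icc s t) :=
    hv.continuous.comp_continuousOn hccont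
  have hFTC : ∫ τ in s..t, G τ = g t - g s :=
    intervalIntegral.integral_eq_sub_of_hasDeriv_right_of_le hst hgcont
      (fun τ hτ => (hg τ hτ).hasDerivWithinAt) hGint
  have hmono : ∫ τ in s..t, -G τ ≤ ∫ τ in s..t, φ τ :=
    intervalIntegral.integral_mono_on hst hGint.neg hφint hkey
  rw [intervalIntegral.integral_neg, hFTC] at hmono
  -- identify the goal integral with ∫ φ
  have hcongr : (∫ τ in s..t,
      (sSup (Set.range fun p => -⟪deriv x τ, p⟫ - H p) + α (τ, x τ)))
      = ∫ τ in s..t, φ τ := by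
    apply intervalIntegral.integral_congr_ae
    have h0 : ∀ᵐ τ : ℝ, τ ≠ t := by
      rw [MeasureTheory.ae_iff]
      have h1 : {τ : ℝ | ¬τ ≠ t} = {t} := by ext τ; simp
      rw [h1]
      exact measure_singleton t
    filter_upwards [h0] with τ hτ hmemτ
    rw [Set.uIoc_of_le hst] at hmemτ
    have hτIoo : τ ∈ Set.Ioo s t := ⟨hmemτ.1, lt_of_le_of_ne hmemτ.2 hτ⟩
    have hmem' : Set.Icc s t ∈ nhds τ := Icc_mem_nhds hτIoo.1 hτIoo.2
    have hderiv_eq : deriv x τ = ξ' τ := (derivWithin_of_mem_nhds hmem').symm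
    show sSup _ + _ = L (ξ' τ) + α (τ, x τ)
    rw [hderiv_eq]
  rw [hcongr]
  have : g s ≤ g t + ∫ τ in s..t, φ τ := by linarith
  exact this

end
end

section
/- Let N ≥ 1, q > 1, q' = q/(q−1), δ > 0, and 0 < β < 1/(N(q−1)). Fix x ∈ ℝ^N and s < t, and for σ in the open ball B_δ ⊂ ℝ^N define the curve x_σ(τ) = x + σ(τ−s)^β for s ≤ τ ≤ (s+t)/2 and x_σ(τ) = x + σ(t−τ)^β for (s+t)/2 ≤ τ ≤ t. Then there exists a constant C_δ > 0, depending only on N, q, β, δ, such that for every nonnegative α ∈ L^{q'}([s,t]×ℝ^N): ∫_s^t ∫_{B_δ} α(τ, x_σ(τ)) dσ dτ ≤ C_δ (t−s)^{(1 − Nβ(q−1))/q} ‖α‖_{L^{q'}([s,t]×ℝ^N)}. -/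
open Set MeasureTheory
open scoped ENNReal
set_option maxHeartbeats 1600000

noncomputable section

private lemma int_le_of_lint_le {X : Type*} [MeasurableSpace X] {μ : Measure X}
    {f : X → ℝ} (hf : ∀ x, 0 ≤ f x) {B : ℝ} (hB : 0 ≤ B)
    (h : ∫⁻ x, ENNReal.ofReal (f x) ∂μ ≤ ENNReal.ofReal B) : ∫ x, f x ∂μ ≤ B := by
  by_cases hi : Integrable f μ
  · rw [integral_eq_lintegral_of_nonneg_ae (Filter.Eventually.of_forall hf) hi.aestronglyMeasurable]
    calc (∫⁻ x, ENNReal.ofReal (f x) ∂μ).toReal ≤ (ENNReal.ofReal B).toReal :=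
          ENNReal.toReal_mono ENNReal.ofReal_ne_top h
      _ = B := ENNReal.toReal_ofReal hB
  · rw [integral_undef hi]; exact hB

private lemma ofReal_int_le {X : Type*} [MeasurableSpace X] {μ : Measure X}
    {f : X → ℝ} (hf : ∀ x, 0 ≤ f x) :
    ENNReal.ofReal (∫ x, f x ∂μ) ≤ ∫⁻ x, ENNReal.ofReal (f x) ∂μ := by
  by_cases hi : Integrable f μ
  · rw [← ofReal_integral_eq_lintegral_ofReal hi (Filter.Eventually.of_forall hf)]
  · rw [integral_undef hi]; simp

private lemma lint_comp_affine {N : ℕ} (x : EuclideanSpace ℝ (Fin N)) {c : ℝ} (hc : c ≠ 0)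
    {H : EuclideanSpace ℝ (Fin N) → ℝ≥0∞} (hH : Measurable H) :
    ∫⁻ σ, H (x + c • σ) = ENNReal.ofReal |(c ^ N : ℝ)|⁻¹ * ∫⁻ y, H y := by
  have h1 : ∫⁻ y, H (x + y) ∂(Measure.map (c • ·) volume) = ∫⁻ σ, H (x + c • σ) :=
    lintegral_map (hH.comp (measurable_const_add x)) (measurable_const_smul c)
  rw [← h1, Measure.map_addHaar_smul volume hc, lintegral_smul_measure,
    lintegral_add_left_eq_self (fun y => H y) x, finrank_euclideanSpace_fin, abs_inv, smul_eq_mul]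

private lemma aux_intOn {s t m a : ℝ} (hst : s < t) (hm : m = (s+t)/2) (ha1 : a < 1) :
    IntegrableOn (fun τ => (if τ ≤ m then τ - s else t - τ) ^ (-a)) (Ioo s t) volume := by
  have hsm : s < m := by rw [hm]; linarith
  have hmt : m < t := by rw [hm]; linarith
  have h1 : IntegrableOn (fun τ : ℝ => (τ - s) ^ (-a)) (Ioc s m) volume := by
    have := (intervalIntegral.intervalIntegrable_rpow' (a := 0) (b := m - s) (by linarith : (-1:ℝ) < -a)).comp_sub_right s
    rw [zero_add, sub_add_cancel] at this
    exact (intervalIntegrable_iff_integrableOn_Ioc_of_le hsm.le).mp this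
  have h2 : IntegrableOn (fun τ : ℝ => (t - τ) ^ (-a)) (Ioo m t) volume := by
    have := (intervalIntegral.intervalIntegrable_rpow' (a := 0) (b := t - m) (by linarith : (-1:ℝ) < -a)).comp_sub_left t
    rw [sub_zero, sub_sub_cancel] at this
    exact ((intervalIntegrable_iff_integrableOn_Ioc_of_le hmt.le).mp this.symm).mono_set Ioo_subset_Ioc_self
  rw [← Ioc_union_Ioo_eq_Ioo hsm.le hmt]
  refine IntegrableOn.union ?_ ?_
  · exact (integrableOn_congr_fun (fun τ hτ => by simp [hτ.2]) measurableSet_Ioc).mpr h1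
  · refine (integrableOn_congr_fun (fun τ hτ => ?_) measurableSet_Ioo).mpr h2
    simp [not_le.mpr hτ.1]

private lemma aux_intval {s t m a : ℝ} (hst : s < t) (hm : m = (s+t)/2) (ha1 : a < 1) :
    ∫ τ in Ioo s t, (if τ ≤ m then τ - s else t - τ) ^ (-a)
      = 2 ^ a * (t - s) ^ (1-a) / (1-a) := by
  have hsm : s < m := by rw [hm]; linarith
  have hmt : m < t := by rw [hm]; linarith
  have h1 : IntegrableOn (fun τ : ℝ => (τ - s) ^ (-a)) (Ioc s m) volume := by
    have := (intervalIntegral.intervalIntegrable_rpow' (a := 0) (b := m - s) (by linarith : (-1:ℝ) < -a)).comp_sub_right s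
    rw [zero_add, sub_add_cancel] at this
    exact (intervalIntegrable_iff_integrableOn_Ioc_of_le hsm.le).mp this
  have h2 : IntegrableOn (fun τ : ℝ => (t - τ) ^ (-a)) (Ioo m t) volume := by
    have := (intervalIntegral.intervalIntegrable_rpow' (a := 0) (b := t - m) (by linarith : (-1:ℝ) < -a)).comp_sub_left t
    rw [sub_zero, sub_sub_cancel] at this
    exact ((intervalIntegrable_iff_integrableOn_Ioc_of_le hmt.le).mp this.symm).mono_set Ioo_subset_Ioc_self
  have hdisj : Disjoint (Ioc s m) (Ioo m t) := by
    refine Set.disjoint_left.mpr fun τ h1 h2 => ?_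
    exact absurd h1.2 (not_le.mpr h2.1)
  rw [← Ioc_union_Ioo_eq_Ioo hsm.le hmt, setIntegral_union hdisj measurableSet_Ioo
      ((integrableOn_congr_fun (fun τ hτ => by simp [hτ.2]) measurableSet_Ioc).mpr h1)
      ((integrableOn_congr_fun (fun τ (hτ : τ ∈ Ioo m t) => by simp [not_le.mpr hτ.1]) measurableSet_Ioo).mpr h2)]
  have e1 : ∫ τ in Ioc s m, (if τ ≤ m then τ - s else t - τ) ^ (-a) = ((t-s)/2) ^ (1-a) / (1-a) := by
    rw [setIntegral_congr_fun (g := fun τ => (τ - s) ^ (-a)) measurableSet_Ioc (fun τ hτ => by simp [hτ.2])]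
    rw [← intervalIntegral.integral_of_le hsm.le,
      intervalIntegral.integral_comp_sub_right (fun u => u ^ (-a)) s, sub_self,
      integral_rpow (Or.inl (by linarith : (-1:ℝ) < -a))]
    rw [Real.zero_rpow (by linarith : -a + 1 ≠ 0)]
    rw [(by rw [hm]; ring : m - s = (t-s)/2)]
    ring_nf
  have e2 : ∫ τ in Ioo m t, (if τ ≤ m then τ - s else t - τ) ^ (-a) = ((t-s)/2) ^ (1-a) / (1-a) := by
    rw [setIntegral_congr_fun (g := fun τ => (t - τ) ^ (-a)) measurableSet_Ioo (fun τ (hτ : τ ∈ Ioo m t) => by simp [not_le.mpr hτ.1])]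
    rw [← integral_Ioc_eq_integral_Ioo, ← intervalIntegral.integral_of_le hmt.le,
      intervalIntegral.integral_comp_sub_left (fun u => u ^ (-a)) t, sub_self,
      integral_rpow (Or.inl (by linarith : (-1:ℝ) < -a))]
    rw [Real.zero_rpow (by linarith : -a + 1 ≠ 0)]
    rw [(by rw [hm]; ring : t - m = (t-s)/2)]
    ring_nf
  have hts : (0:ℝ) ≤ t - s := by linarith
  rw [e1, e2, Real.div_rpow hts (by norm_num : (0:ℝ) ≤ 2)]
  have h2a : (2:ℝ)^a * 2^(1-a) = 2 := by rw [← Real.rpow_add two_pos]; norm_num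
  have hne : (2:ℝ)^(1-a) ≠ 0 := (Real.rpow_pos_of_pos two_pos _).ne'
  have h1a : (1:ℝ) - a ≠ 0 := by linarith
  field_simp
  linear_combination (-(t-s)^(1-a)) * h2a

theorem stmt11 (N : ℕ) (hN : 1 ≤ N) (q : ℝ) (hq : 1 < q)
    (β δ : ℝ) (hδ : 0 < δ) (hβ0 : 0 < β) (hβ : β < 1 / (N * (q - 1))) :
    ∃ Cδ > (0:ℝ), ∀ (x : EuclideanSpace ℝ (Fin N)) (s t : ℝ), s < t →
      ∀ α : ℝ × EuclideanSpace ℝ (Fin N) → ℝ,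
        (∀ z, 0 ≤ α z) →
        MemLp α (ENNReal.ofReal (q / (q - 1)))
          (volume.restrict
            (Set.Icc s t ×ˢ (Set.univ : Set (EuclideanSpace ℝ (Fin N))))) →
        (∫ τ in s..t, ∫ σ in Metric.ball (0 : EuclideanSpace ℝ (Fin N)) δ,
            α (τ, x + ((if τ ≤ (s + t) / 2 then τ - s else t - τ) ^ β) • σ))
          ≤ Cδ * (t - s) ^ ((1 - N * β * (q - 1)) / q)
            * (∫ z in Set.Icc s t ×ˢ (Set.univ : Set (EuclideanSpace ℝ (Fin N))),
                |α z| ^ (q / (q - 1))) ^ ((q - 1) / q) := by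
  have hq0 : (0:ℝ) < q := by linarith
  have hNR : (1:ℝ) ≤ (N:ℝ) := by exact_mod_cast hN
  have hNq : (0:ℝ) < (N:ℝ) * (q - 1) := by nlinarith
  set a : ℝ := (N:ℝ) * β * (q - 1) with ha_def
  have ha0 : 0 < a := by rw [ha_def]; nlinarith
  have ha1 : a < 1 := by
    have h := (lt_div_iff₀ hNq).mp hβ
    rw [ha_def]; nlinarith
  set q' : ℝ := q / (q - 1) with hq'_def
  have hconj : q.HolderConjugate q' := Real.HolderConjugate.conjExponent hq
  have hq'pos : 0 < q' := hconj.symm.pos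
  have hq'inv : 1 / q' = (q-1)/q := by rw [hq'_def, one_div_div]
  set V : ℝ≥0∞ := volume (Metric.ball (0 : EuclideanSpace ℝ (Fin N)) δ) with hV_def
  have hV0 : V ≠ 0 := (Metric.measure_ball_pos _ _ hδ).ne'
  have hVtop : V ≠ ∞ := measure_ball_lt_top.ne
  have hVtR : 0 < V.toReal := ENNReal.toReal_pos hV0 hVtop
  have hCpos : 0 < V.toReal ^ (1/q) * (2 ^ a / (1 - a)) ^ (1/q) := by
    have h2 : (0:ℝ) < 2 ^ a / (1 - a) :=
      div_pos (Real.rpow_pos_of_pos two_pos a) (by linarith)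
    positivity
  refine ⟨_, hCpos, ?_⟩
  intro x s t hst α hα hαLp
  have hsm : s < (s+t)/2 := by linarith
  have hmt : (s+t)/2 < t := by linarith
  have hr_pos : ∀ τ ∈ Ioo s t, 0 < (if τ ≤ (s+t)/2 then τ - s else t - τ) := by
    intro τ hτ
    split_ifs with h
    · linarith [hτ.1]
    · linarith [hτ.2]
  -- measurable version of α
  have hmeas := hαLp.1
  set α₀ := hmeas.mk α with hα₀_def
  have hα₀m : Measurable α₀ := hmeas.stronglyMeasurable_mk.measurable
  have hae : α =ᶠ[ae (volume.restrict (Icc s t ×ˢ (univ : Set (EuclideanSpace ℝ (Fin N)))))] α₀ :=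
    hmeas.ae_eq_mk
  set g : ℝ × EuclideanSpace ℝ (Fin N) → ℝ≥0∞ := fun z => ENNReal.ofReal (α₀ z) with hg_def
  have hgm : Measurable g := ENNReal.measurable_ofReal.comp hα₀m
  set J : ℝ → ℝ≥0∞ := fun τ => ∫⁻ y, (g (τ, y)) ^ q' with hJ_def
  have hJτ : ∀ τ, J τ = ∫⁻ y, (g (τ, y)) ^ q' := fun _ => rfl
  have hJm : Measurable J := (hgm.pow_const q').lintegral_prod_right'
  set w : ℝ → ℝ≥0∞ :=
    fun τ => ENNReal.ofReal ((if τ ≤ (s+t)/2 then τ - s else t - τ) ^ (-(a/q))) with hw_def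
  have hrm : Measurable (fun τ : ℝ => if τ ≤ (s+t)/2 then τ - s else t - τ) :=
    Measurable.ite (measurableSet_le measurable_id measurable_const)
      (measurable_id.sub_const s) (measurable_const.sub measurable_id)
  have hwm : Measurable w := ENNReal.measurable_ofReal.comp (hrm.pow_const _)
  set Iα : ℝ :=
    ∫ z in Set.Icc s t ×ˢ (Set.univ : Set (EuclideanSpace ℝ (Fin N))), |α z| ^ q' with hIα_def
  have hIα0 : 0 ≤ Iα :=
    integral_nonneg fun z => Real.rpow_nonneg (abs_nonneg _) _
  -- nonnegativity of the target bound
  have hB0 : 0 ≤ V.toReal ^ (1/q) * (2 ^ a / (1 - a)) ^ (1/q) * (t - s) ^ ((1-a)/q)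
      * Iα ^ ((q-1)/q) :=
    mul_nonneg (mul_nonneg hCpos.le (Real.rpow_nonneg (by linarith) _))
      (Real.rpow_nonneg hIα0 _)
  rw [intervalIntegral.integral_of_le hst.le, integral_Ioc_eq_integral_Ioo]
  refine int_le_of_lint_le (fun τ => integral_nonneg fun σ => hα _) hB0 ?_
  -- Step A : replace α by α₀ a.e.
  have hED : volume ({z | ¬ α z = α₀ z}
      ∩ (Icc s t ×ˢ (univ : Set (EuclideanSpace ℝ (Fin N))))) = 0 := by
    have h0 := ae_iff.mp hae
    rwa [Measure.restrict_apply' (measurableSet_Icc.prod MeasurableSet.univ)] at h0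
  set D := toMeasurable volume ({z | ¬ α z = α₀ z}
      ∩ (Icc s t ×ˢ (univ : Set (EuclideanSpace ℝ (Fin N))))) with hD_def
  have hDm : MeasurableSet D := measurableSet_toMeasurable _ _
  have hD0 : volume D = 0 := by rw [hD_def, measure_toMeasurable]; exact hED
  have hslice : ∀ᵐ τ : ℝ ∂volume, volume (Prod.mk τ ⁻¹' D) = 0 := by
    have hprod : ((volume : Measure ℝ).prod
        (volume : Measure (EuclideanSpace ℝ (Fin N)))) D = 0 := by
      rw [← Measure.volume_eq_prod _ _]; exact hD0
    exact (Measure.measure_prod_null hDm).mp hprod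
  have hnull : ∀ᵐ τ ∂(volume.restrict (Ioo s t)),
      (∫⁻ σ in Metric.ball (0 : EuclideanSpace ℝ (Fin N)) δ,
        ENNReal.ofReal (α (τ, x + ((if τ ≤ (s + t) / 2 then τ - s else t - τ) ^ β) • σ)))
      = ∫⁻ σ in Metric.ball (0 : EuclideanSpace ℝ (Fin N)) δ,
          g (τ, x + ((if τ ≤ (s + t) / 2 then τ - s else t - τ) ^ β) • σ) := by
    filter_upwards [ae_restrict_of_ae hslice, ae_restrict_mem measurableSet_Ioo]
      with τ hτD hτmem
    have hccpos : 0 < (if τ ≤ (s+t)/2 then τ - s else t - τ) ^ β :=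
      Real.rpow_pos_of_pos (hr_pos τ hτmem) β
    have hpre0 : volume
        ((((if τ ≤ (s+t)/2 then τ - s else t - τ) ^ β : ℝ) • ·) ⁻¹'
          ((fun y => x + y) ⁻¹' (Prod.mk τ ⁻¹' D))) = 0 := by
      rw [Measure.addHaar_preimage_smul volume hccpos.ne',
        measure_preimage_add _ _ _, hτD, mul_zero]
    have hsub : {σ : EuclideanSpace ℝ (Fin N) |
        ¬ α (τ, x + ((if τ ≤ (s + t) / 2 then τ - s else t - τ) ^ β) • σ)
          = α₀ (τ, x + ((if τ ≤ (s + t) / 2 then τ - s else t - τ) ^ β) • σ)}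
        ⊆ (((if τ ≤ (s+t)/2 then τ - s else t - τ) ^ β : ℝ) • ·) ⁻¹'
          ((fun y => x + y) ⁻¹' (Prod.mk τ ⁻¹' D)) := by
      intro σ hσ
      exact subset_toMeasurable _ _
        ⟨hσ, ⟨⟨hτmem.1.le, hτmem.2.le⟩, trivial⟩⟩
    have hptae : ∀ᵐ σ ∂(volume : Measure (EuclideanSpace ℝ (Fin N))),
        α (τ, x + ((if τ ≤ (s + t) / 2 then τ - s else t - τ) ^ β) • σ)
          = α₀ (τ, x + ((if τ ≤ (s + t) / 2 then τ - s else t - τ) ^ β) • σ) := by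
      rw [ae_iff]
      exact measure_mono_null hsub hpre0
    exact lintegral_congr_ae ((ae_restrict_of_ae hptae).mono fun σ hσ =>
      congrArg ENNReal.ofReal hσ)
  -- Step B : pointwise Hölder + change of variables in the inner integral
  have hpoint : ∀ τ ∈ Ioo s t,
      (∫⁻ σ in Metric.ball (0 : EuclideanSpace ℝ (Fin N)) δ,
        g (τ, x + ((if τ ≤ (s + t) / 2 then τ - s else t - τ) ^ β) • σ))
      ≤ V ^ (1/q) * (w τ * J τ ^ (1/q')) := by
    intro τ hτ
    have hrpos := hr_pos τ hτ
    have hccpos : 0 < (if τ ≤ (s+t)/2 then τ - s else t - τ) ^ β :=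
      Real.rpow_pos_of_pos hrpos β
    have hmeasσ : Measurable fun σ : EuclideanSpace ℝ (Fin N) =>
        g (τ, x + ((if τ ≤ (s + t) / 2 then τ - s else t - τ) ^ β) • σ) :=
      hgm.comp (measurable_const.prodMk (measurable_const.add (measurable_const_smul _)))
    calc ∫⁻ σ in Metric.ball (0 : EuclideanSpace ℝ (Fin N)) δ,
          g (τ, x + ((if τ ≤ (s + t) / 2 then τ - s else t - τ) ^ β) • σ)
        ≤ V ^ (1/q)
          * (∫⁻ σ in Metric.ball (0 : EuclideanSpace ℝ (Fin N)) δ,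
              (g (τ, x + ((if τ ≤ (s + t) / 2 then τ - s else t - τ) ^ β) • σ)) ^ q') ^ (1/q') := by
          have h := ENNReal.lintegral_mul_le_Lp_mul_Lq
            (volume.restrict (Metric.ball (0 : EuclideanSpace ℝ (Fin N)) δ)) hconj
            (f := fun _ => (1:ℝ≥0∞))
            (g := fun σ => g (τ, x + ((if τ ≤ (s + t) / 2 then τ - s else t - τ) ^ β) • σ))
            aemeasurable_const hmeasσ.aemeasurable
          rw [hV_def]
          simpa using h
      _ ≤ V ^ (1/q)
          * (∫⁻ σ, (g (τ, x + ((if τ ≤ (s + t) / 2 then τ - s else t - τ) ^ β) • σ)) ^ q') ^ (1/q') := by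
          gcongr
          exact Measure.restrict_le_self
      _ = V ^ (1/q)
          * ((ENNReal.ofReal |(((if τ ≤ (s+t)/2 then τ - s else t - τ) ^ β : ℝ) ^ N)|⁻¹
              * J τ) ^ (1/q')) := by
          rw [hJτ τ, lint_comp_affine (H := fun y => (g (τ, y)) ^ q') x hccpos.ne'
            ((hgm.comp (measurable_const.prodMk measurable_id)).pow_const q')]
      _ = V ^ (1/q) * (w τ * J τ ^ (1/q')) := by
          rw [ENNReal.mul_rpow_of_nonneg _ _ (one_div_nonneg.mpr hq'pos.le)]
          congr 1
          have e1 : (((if τ ≤ (s+t)/2 then τ - s else t - τ) ^ β : ℝ) ^ N)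
              = (if τ ≤ (s+t)/2 then τ - s else t - τ) ^ (β * N) := by
            rw [Real.rpow_mul hrpos.le, Real.rpow_natCast]
          have hwτ : w τ
              = ENNReal.ofReal ((if τ ≤ (s+t)/2 then τ - s else t - τ) ^ (-(a/q))) := rfl
          rw [hwτ, abs_of_pos (pow_pos hccpos N), e1, ← Real.rpow_neg hrpos.le,
            ENNReal.ofReal_rpow_of_nonneg (Real.rpow_nonneg hrpos.le _)
              (one_div_nonneg.mpr hq'pos.le),
            ← Real.rpow_mul hrpos.le]
          congr 1
          rw [hq'inv, ha_def]; ring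
  -- Step C : main chain of estimates
  have hmain : ∫⁻ τ in Ioo s t,
      ENNReal.ofReal (∫ σ in Metric.ball (0 : EuclideanSpace ℝ (Fin N)) δ,
        α (τ, x + ((if τ ≤ (s + t) / 2 then τ - s else t - τ) ^ β) • σ))
      ≤ V ^ (1/q)
        * ((∫⁻ τ in Ioo s t, w τ ^ q) ^ (1/q) * (∫⁻ τ in Ioo s t, J τ) ^ (1/q')) := by
    calc ∫⁻ τ in Ioo s t,
        ENNReal.ofReal (∫ σ in Metric.ball (0 : EuclideanSpace ℝ (Fin N)) δ,
          α (τ, x + ((if τ ≤ (s + t) / 2 then τ - s else t - τ) ^ β) • σ))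
        ≤ ∫⁻ τ in Ioo s t, ∫⁻ σ in Metric.ball (0 : EuclideanSpace ℝ (Fin N)) δ,
            ENNReal.ofReal (α (τ, x + ((if τ ≤ (s + t) / 2 then τ - s else t - τ) ^ β) • σ)) :=
          lintegral_mono fun τ => ofReal_int_le fun σ => hα _
      _ = ∫⁻ τ in Ioo s t, ∫⁻ σ in Metric.ball (0 : EuclideanSpace ℝ (Fin N)) δ,
            g (τ, x + ((if τ ≤ (s + t) / 2 then τ - s else t - τ) ^ β) • σ) :=
          lintegral_congr_ae hnull
      _ ≤ ∫⁻ τ in Ioo s t, V ^ (1/q) * (w τ * J τ ^ (1/q')) := by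
          refine lintegral_mono_ae ?_
          filter_upwards [ae_restrict_mem measurableSet_Ioo] with τ hτ
          exact hpoint τ hτ
      _ = V ^ (1/q) * ∫⁻ τ in Ioo s t, w τ * J τ ^ (1/q') :=
          lintegral_const_mul' _ _ (ENNReal.rpow_ne_top_of_nonneg (one_div_nonneg.mpr hq0.le) hVtop)
      _ ≤ V ^ (1/q) * ((∫⁻ τ in Ioo s t, w τ ^ q) ^ (1/q)
            * (∫⁻ τ in Ioo s t, (J τ ^ (1/q')) ^ q') ^ (1/q')) := by
          gcongr
          have h := ENNReal.lintegral_mul_le_Lp_mul_Lq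
            (volume.restrict (Ioo s t)) hconj
            (f := w) (g := fun τ => J τ ^ (1/q'))
            hwm.aemeasurable ((hJm.pow_const _).aemeasurable)
          simpa using h
      _ = V ^ (1/q) * ((∫⁻ τ in Ioo s t, w τ ^ q) ^ (1/q)
            * (∫⁻ τ in Ioo s t, J τ) ^ (1/q')) := by
          have hid : (∫⁻ τ in Ioo s t, (J τ ^ (1/q')) ^ q') = ∫⁻ τ in Ioo s t, J τ :=
            lintegral_congr fun τ => by
              rw [← ENNReal.rpow_mul, one_div, inv_mul_cancel₀ hq'pos.ne', ENNReal.rpow_one]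
          rw [hid]
  -- evaluate the weight integral
  have hW : (∫⁻ τ in Ioo s t, w τ ^ q)
      = ENNReal.ofReal (2 ^ a * (t - s) ^ (1-a) / (1-a)) := by
    have hcongr : ∫⁻ τ in Ioo s t, w τ ^ q
        = ∫⁻ τ in Ioo s t,
            ENNReal.ofReal ((if τ ≤ (s+t)/2 then τ - s else t - τ) ^ (-a)) := by
      refine setLIntegral_congr_fun measurableSet_Ioo
        (fun τ hτ => ?_)
      have hrpos := hr_pos τ hτ
      rw [hw_def]; simp only []
      rw [ENNReal.ofReal_rpow_of_nonneg (Real.rpow_nonneg hrpos.le _) hq0.le,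
        ← Real.rpow_mul hrpos.le]
      congr 2
      field_simp
    rw [hcongr, ← ofReal_integral_eq_lintegral_ofReal (aux_intOn hst rfl ha1) ?hnn]
    · rw [aux_intval hst rfl ha1]
    case hnn =>
      filter_upwards [ae_restrict_mem measurableSet_Ioo] with τ hτ
      exact Real.rpow_nonneg (hr_pos τ hτ).le _
  -- evaluate the L^{q'} integral
  have hT : (∫⁻ τ in Ioo s t, J τ) = ENNReal.ofReal Iα := by
    have hprodeq : ((volume : Measure ℝ).restrict (Icc s t)).prod
        (volume : Measure (EuclideanSpace ℝ (Fin N)))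
        = (volume : Measure (ℝ × EuclideanSpace ℝ (Fin N))).restrict
            (Icc s t ×ˢ (univ : Set (EuclideanSpace ℝ (Fin N)))) := by
      rw [Measure.volume_eq_prod _ _]
      simp [← Measure.prod_restrict]
    have h1 : ∫⁻ τ in Ioo s t, J τ = ∫⁻ τ in Icc s t, J τ :=
      setLIntegral_congr Ioo_ae_eq_Icc
    have h2 : ∫⁻ τ in Icc s t, J τ
        = ∫⁻ z in Icc s t ×ˢ (univ : Set (EuclideanSpace ℝ (Fin N))), (g z) ^ q' := by
      rw [← hprodeq, lintegral_prod _ ((hgm.pow_const q').aemeasurable)]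
    have h3 : (∫⁻ z in Icc s t ×ˢ (univ : Set (EuclideanSpace ℝ (Fin N))), (g z) ^ q')
        = ∫⁻ z in Icc s t ×ˢ (univ : Set (EuclideanSpace ℝ (Fin N))),
            ENNReal.ofReal (|α z| ^ q') := by
      refine lintegral_congr_ae (hae.mono fun z hz => ?_)
      show g z ^ q' = ENNReal.ofReal (|α z| ^ q')
      have hgz : g z = ENNReal.ofReal (α z) := congrArg ENNReal.ofReal hz.symm
      rw [hgz, abs_of_nonneg (hα z), ENNReal.ofReal_rpow_of_nonneg (hα z) hq'pos.le]
    have hInt : Integrable (fun z => |α z| ^ q')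
        (volume.restrict (Icc s t ×ˢ (univ : Set (EuclideanSpace ℝ (Fin N))))) := by
      have h := hαLp.integrable_norm_rpow
        (by simpa using (ENNReal.ofReal_pos.mpr hq'pos).ne') ENNReal.ofReal_ne_top
      simpa [Real.norm_eq_abs, ENNReal.toReal_ofReal hq'pos.le] using h
    rw [h1, h2, h3, ← ofReal_integral_eq_lintegral_ofReal hInt
      (Filter.Eventually.of_forall fun z => Real.rpow_nonneg (abs_nonneg _) _)]
  -- put everything together
  refine le_trans hmain ?_
  rw [hW, hT]
  have hVr : V ^ (1/q) = ENNReal.ofReal (V.toReal ^ (1/q)) := by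
    conv_lhs => rw [← ENNReal.ofReal_toReal hVtop]
    rw [ENNReal.ofReal_rpow_of_nonneg ENNReal.toReal_nonneg (one_div_nonneg.mpr hq0.le)]
  have hWnn : (0:ℝ) ≤ 2 ^ a * (t - s) ^ (1-a) / (1-a) :=
    div_nonneg (mul_nonneg (Real.rpow_nonneg (by norm_num) a)
      (Real.rpow_nonneg (by linarith) _)) (by linarith)
  rw [hVr,
    ENNReal.ofReal_rpow_of_nonneg hWnn (one_div_nonneg.mpr hq0.le),
    ENNReal.ofReal_rpow_of_nonneg hIα0 (one_div_nonneg.mpr hq'pos.le),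
    ← ENNReal.ofReal_mul (Real.rpow_nonneg hWnn _),
    ← ENNReal.ofReal_mul (Real.rpow_nonneg ENNReal.toReal_nonneg _)]
  refine ENNReal.ofReal_le_ofReal (le_of_eq ?_)
  have hts : (0:ℝ) ≤ t - s := by linarith
  have e1 : (2 ^ a * (t - s) ^ (1-a) / (1-a)) ^ (1/q)
      = (2 ^ a / (1 - a)) ^ (1/q) * (t - s) ^ ((1-a)/q) := by
    rw [(by ring : 2 ^ a * (t - s) ^ (1-a) / (1-a) = (2 ^ a / (1 - a)) * (t - s) ^ (1-a)),
      Real.mul_rpow (div_nonneg (Real.rpow_nonneg (by norm_num) a) (by linarith)) (Real.rpow_nonneg hts _),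
      ← Real.rpow_mul hts, mul_one_div]
  rw [e1, hq'inv]
  ring
end
end

section
/- Let (Q, μ) be a measure space with μ(Q) < ∞, let r > 1, q > 1, r' = r/(r−1), and let m : Q → [0,∞) be measurable with m ∈ L^q(μ), and w : Q → ℝ^N be measurable with w = 0 a.e. on the set {m = 0}. Suppose A := ∫_{{m>0}} |w|^{r'} / m^{r'−1} dμ < ∞. Then w ∈ L^γ(μ; ℝ^N) with γ = qr/(qr − q + 1), and moreover ∫_Q |w|^γ dμ ≤ A^{q/(r'+q−1)} · ( ∫_Q m^q dμ )^{(r'−1)/(r'+q−1)}. -/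
open Set MeasureTheory
open scoped ENNReal

noncomputable section

theorem stmt17 (N : ℕ) {Q : Type*} [MeasurableSpace Q] (μ : Measure Q)
    [IsFiniteMeasure μ] (r q : ℝ) (hr : 1 < r) (hq : 1 < q)
    (m : Q → ℝ) (hm : Measurable m) (hm0 : ∀ x, 0 ≤ m x)
    (hmq : MemLp m (ENNReal.ofReal q) μ)
    (w : Q → EuclideanSpace ℝ (Fin N)) (hw : Measurable w)
    (hw0 : ∀ᵐ x ∂μ, m x = 0 → w x = 0)
    (hA : (∫⁻ x in {x | 0 < m x},
        ENNReal.ofReal (‖w x‖ ^ (r / (r - 1)) / (m x) ^ (r / (r - 1) - 1)) ∂μ) < ⊤) :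
    MemLp w (ENNReal.ofReal (q * r / (q * r - q + 1))) μ ∧
    (∫ x, ‖w x‖ ^ (q * r / (q * r - q + 1)) ∂μ)
      ≤ ((∫⁻ x in {x | 0 < m x},
            ENNReal.ofReal (‖w x‖ ^ (r / (r - 1)) / (m x) ^ (r / (r - 1) - 1)) ∂μ).toReal)
              ^ (q / (r / (r - 1) + q - 1))
        * (∫ x, (m x) ^ q ∂μ) ^ ((r / (r - 1) - 1) / (r / (r - 1) + q - 1)) := by
  have hr1 : (0:ℝ) < r - 1 := by linarith
  have hq0 : (0:ℝ) < q := by linarith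
  set r' : ℝ := r / (r - 1) with hr'def
  set γ : ℝ := q * r / (q * r - q + 1) with hγdef
  have hr'1 : 1 < r' := by
    rw [hr'def, lt_div_iff₀ hr1]; linarith
  have hden : (0:ℝ) < q * r - q + 1 := by nlinarith
  have hγ0 : 0 < γ := by
    rw [hγdef]; exact div_pos (by nlinarith) hden
  have hr'q : (0:ℝ) < r' + q - 1 := by linarith
  set p : ℝ := (r' + q - 1) / q with hpdef
  set p' : ℝ := (r' + q - 1) / (r' - 1) with hp'def
  have hp1 : 1 < p := by
    rw [hpdef, lt_div_iff₀ hq0]; linarith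
  have hp0 : 0 < p := by linarith
  have hp'0 : 0 < p' := by
    rw [hp'def]; exact div_pos hr'q (by linarith)
  have hpq : p.HolderConjugate p' := by
    rw [Real.holderConjugate_iff]
    constructor
    · exact hp1
    · rw [hpdef, hp'def]
      field_simp
      ring
  have h1p : 1 / p = q / (r' + q - 1) := by
    rw [hpdef, one_div_div]
  have h1p' : 1 / p' = (r' - 1) / (r' + q - 1) := by
    rw [hp'def, one_div_div]
  have hγr'p : r' * (1 / p) = γ := by
    rw [h1p, hγdef, hr'def]
    field_simp
    ring_nf
    field_simp [show (1 + r * q - q) ≠ 0 by nlinarith]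
    ring
  have hcross : (r' - 1) * (1 / p) = q * (1 / p') := by
    rw [h1p, h1p']
    ring
  set s : Set Q := {x | 0 < m x} with hsdef
  have hs : MeasurableSet s := measurableSet_lt measurable_const hm
  set f : Q → ℝ≥0∞ := fun x => ENNReal.ofReal (‖w x‖ ^ r' / (m x) ^ (r' - 1)) with hfdef
  set g : Q → ℝ≥0∞ := fun x => ENNReal.ofReal ((m x) ^ q) with hgdef
  set A : ℝ≥0∞ := ∫⁻ x in s, f x ∂μ with hAdef
  set B : ℝ≥0∞ := ∫⁻ x, g x ∂μ with hBdef
  -- measurability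
  have hwn : Measurable fun x => ‖w x‖ := hw.norm
  have hfm : Measurable f := by
    apply Measurable.ennreal_ofReal
    exact (hwn.pow measurable_const).div (hm.pow measurable_const)
  have hgm : Measurable g := by
    apply Measurable.ennreal_ofReal
    exact hm.pow measurable_const
  -- B < ⊤
  have hgco : ∀ x, ((‖m x‖₊ : ℝ≥0∞)) ^ q = g x := by
    intro x
    simp only [hgdef]
    rw [← ENNReal.ofReal_rpow_of_nonneg (hm0 x) hq0.le]
    congr 1
    exact Real.enorm_eq_ofReal (hm0 x)
  have hB_top : B < ⊤ := by
    have h2 := hmq.2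
    rw [eLpNorm_eq_lintegral_rpow_enorm_toReal (ENNReal.ofReal_pos.mpr hq0).ne'
      ENNReal.ofReal_ne_top] at h2
    rw [ENNReal.toReal_ofReal hq0.le] at h2
    have h3 : (∫⁻ x, ((‖m x‖₊ : ℝ≥0∞)) ^ q ∂μ) < ⊤ :=
      (ENNReal.rpow_lt_top_iff_of_pos (one_div_pos.mpr hq0)).mp h2
    rwa [lintegral_congr hgco] at h3
  -- pointwise identity on s
  have hpt : ∀ x ∈ s, ENNReal.ofReal (‖w x‖ ^ γ) = f x ^ (1 / p) * g x ^ (1 / p') := by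
    intro x hx
    have hb : 0 < m x := hx
    have ha : (0:ℝ) ≤ ‖w x‖ := norm_nonneg _
    simp only [hfdef, hgdef]
    rw [ENNReal.ofReal_rpow_of_nonneg (by positivity) (one_div_nonneg.mpr hp0.le),
        ENNReal.ofReal_rpow_of_nonneg (by positivity) (one_div_nonneg.mpr hp'0.le),
        ← ENNReal.ofReal_mul (by positivity)]
    congr 1
    rw [Real.div_rpow (Real.rpow_nonneg ha _) (Real.rpow_nonneg hb.le _),
        ← Real.rpow_mul ha, ← Real.rpow_mul hb.le, ← Real.rpow_mul hb.le]
    rw [div_mul_eq_mul_div, hcross, hγr'p, mul_div_assoc,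
        div_self (Real.rpow_pos_of_pos hb _).ne', mul_one]
  -- the main lintegral
  set I : ℝ≥0∞ := ∫⁻ x, ENNReal.ofReal (‖w x‖ ^ γ) ∂μ with hIdef
  have hIs : I = ∫⁻ x in s, ENNReal.ofReal (‖w x‖ ^ γ) ∂μ := by
    rw [hIdef, ← lintegral_add_compl _ hs]
    have hzero : ∫⁻ x in sᶜ, ENNReal.ofReal (‖w x‖ ^ γ) ∂μ = 0 := by
      rw [lintegral_eq_zero_iff (hwn.pow measurable_const).ennreal_ofReal]
      rw [Filter.EventuallyEq, ae_restrict_iff' hs.compl]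
      filter_upwards [hw0] with x hx hxc
      have hmx : m x = 0 := le_antisymm (not_lt.mp hxc) (hm0 x)
      rw [hx hmx]
      simp [Real.zero_rpow hγ0.ne']
    rw [hzero, add_zero]
  have hI_le : I ≤ A ^ (1 / p) * B ^ (1 / p') := by
    rw [hIs]
    calc ∫⁻ x in s, ENNReal.ofReal (‖w x‖ ^ γ) ∂μ
        = ∫⁻ x in s, (fun y => f y ^ (1/p)) x * (fun y => g y ^ (1/p')) x ∂μ := by
          exact setLIntegral_congr_fun hs hpt
      _ ≤ (∫⁻ x in s, (f x ^ (1/p)) ^ p ∂μ) ^ (1/p) *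
            (∫⁻ x in s, (g x ^ (1/p')) ^ p' ∂μ) ^ (1/p') := by
          exact ENNReal.lintegral_mul_le_Lp_mul_Lq (μ.restrict s) hpq
            (hfm.pow measurable_const).aemeasurable (hgm.pow measurable_const).aemeasurable
      _ = (∫⁻ x in s, f x ∂μ) ^ (1/p) * (∫⁻ x in s, g x ∂μ) ^ (1/p') := by
          congr 1
          · congr 1
            apply lintegral_congr
            intro x
            rw [← ENNReal.rpow_mul, one_div_mul_cancel hp0.ne', ENNReal.rpow_one]
          · congr 1
            apply lintegral_congr
            intro x
            rw [← ENNReal.rpow_mul, one_div_mul_cancel hp'0.ne', ENNReal.rpow_one]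
      _ ≤ A ^ (1/p) * B ^ (1/p') :=
          mul_le_mul' le_rfl
            (ENNReal.rpow_le_rpow (setLIntegral_le_lintegral _ _) (one_div_nonneg.mpr hp'0.le))
  have hRHS_top : A ^ (1 / p) * B ^ (1 / p') < ⊤ := by
    apply ENNReal.mul_lt_top
    · exact ENNReal.rpow_lt_top_of_nonneg (one_div_nonneg.mpr hp0.le) hA.ne
    · exact ENNReal.rpow_lt_top_of_nonneg (one_div_nonneg.mpr hp'0.le) hB_top.ne
  have hI_top : I < ⊤ := lt_of_le_of_lt hI_le hRHS_top
  -- nnnorm version of I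
  have hInn : (∫⁻ x, ((‖w x‖₊ : ℝ≥0∞)) ^ γ ∂μ) = I := by
    rw [hIdef]
    apply lintegral_congr
    intro x
    rw [← ENNReal.ofReal_rpow_of_nonneg (norm_nonneg _) hγ0.le, ofReal_norm]; rfl
  -- Memℒp
  have hmem : MemLp w (ENNReal.ofReal γ) μ := by
    refine ⟨hw.aestronglyMeasurable, ?_⟩
    rw [eLpNorm_eq_lintegral_rpow_enorm_toReal (ENNReal.ofReal_pos.mpr hγ0).ne' ENNReal.ofReal_ne_top,
      ENNReal.toReal_ofReal hγ0.le]
    apply ENNReal.rpow_lt_top_of_nonneg (one_div_nonneg.mpr hγ0.le)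
    rw [show (∫⁻ x, ‖w x‖ₑ ^ γ ∂μ) = I from hInn]
    exact hI_top.ne
  refine ⟨hmem, ?_⟩
  -- Bochner integrals to lintegrals
  have hint1 : (∫ x, ‖w x‖ ^ γ ∂μ) = I.toReal := by
    rw [hIdef, integral_eq_lintegral_of_nonneg_ae
      (Filter.Eventually.of_forall fun x => Real.rpow_nonneg (norm_nonneg _) _)
      (hwn.pow measurable_const).aestronglyMeasurable]
  have hint2 : (∫ x, (m x) ^ q ∂μ) = B.toReal := by
    rw [hBdef, integral_eq_lintegral_of_nonneg_ae
      (Filter.Eventually.of_forall fun x => Real.rpow_nonneg (hm0 x) _)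
      (hm.pow measurable_const).aestronglyMeasurable]
  rw [hint1, hint2]
  rw [← h1p, ← h1p']
  rw [ENNReal.toReal_rpow, ENNReal.toReal_rpow, ← ENNReal.toReal_mul]
  exact ENNReal.toReal_mono hRHS_top.ne hI_le

end
end
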